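/- arXiv:math/0512616 — 4 statements merged into one kernel-verified Lean document; each statement's English description precedes it below -/
import Mathlib

section
/- Let b_0 = 1 and let b_1,…,b_d be nonzero real numbers with b_d > 0; set a_k' = b_k/b_{k−1} and a_k = b_k/|b_{k−1}| for 1 ≤ k ≤ d. Let S ⊆ ℝ^d be the set of points s = (s_1,…,s_d) such that, with s_0 = 1, for every 1 ≤ k ≤ d the coordinate s_k lies in the half-open interval Ω(conv(0, a_k' s_{k−1})) (which equals (0, x] if x = a_k' s_{k−1} ≥ 0 and (x, 0] if x < 0). Then the number of lattice points of S is |L(S)| = Σ_{s_1=1}^{ ⌊a_1⌋¯ } Σ_{s_2=1}^{ ⌊a_2 s_1⌋¯ } ⋯ Σ_{s_d=1}^{ ⌊a_d s_{d−1}⌋¯ } 1, where each summation index s_i runs over positive integers, ⌊x⌋ is the floor of x, and x̄ = x if x ≥ 0 and x̄ = −x−1 if x < 0 (a sum whose upper bound is 0 is taken to be 0). -/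
open MeasureTheory Polynomial

noncomputable section

/-- The lattice points of `ℝ^d`: points all of whose coordinates are integers. -/
def latticePts (d : ℕ) : Set (Fin d → ℝ) := {x | ∀ i, ∃ n : ℤ, x i = (n : ℝ)}

/-- The projection `π^{(d-k)} : ℝ^d → ℝ^k` forgetting the last `d - k` coordinates
(for `k ≤ d`; junk value `0` in out-of-range coordinates otherwise). -/
def projTo (d k : ℕ) (x : Fin d → ℝ) : Fin k → ℝ :=
  fun i => if h : (i : ℕ) < d then x ⟨(i : ℕ), h⟩ else 0

/-- A polytope with vertex set `V ⊆ ℝ^d` is a lattice-face polytope if for every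
`0 ≤ k ≤ d-1` and every `(k+1)`-subset `U ⊆ V`, `π^{(d-k)}(aff(U) ∩ ℤ^d) = ℤ^k`. -/
def IsLatticeFace (d : ℕ) (V : Finset (Fin d → ℝ)) : Prop :=
  ∀ k : ℕ, k < d → ∀ U : Finset (Fin d → ℝ), U ⊆ V → U.card = k + 1 →
    projTo d k '' ((affineSpan ℝ (U : Set (Fin d → ℝ)) : Set (Fin d → ℝ)) ∩ latticePts d)
      = latticePts k

/-- The last coordinate of a point of `ℝ^d`. -/
def lastCoord (d : ℕ) (x : Fin d → ℝ) : ℝ :=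
  if h : 0 < d then x ⟨d - 1, by omega⟩ else 0

/-- The negative boundary `NB(P)`: points of `P` minimizing the last coordinate in
their fiber over `π(P)`. -/
def NB (d : ℕ) (P : Set (Fin d → ℝ)) : Set (Fin d → ℝ) :=
  {x | x ∈ P ∧ ∀ y ∈ P, projTo d (d - 1) y = projTo d (d - 1) x → lastCoord d x ≤ lastCoord d y}

/-- The positive boundary `PB(P)`: points of `P` maximizing the last coordinate in
their fiber over `π(P)`. -/
def PB (d : ℕ) (P : Set (Fin d → ℝ)) : Set (Fin d → ℝ) :=
  {x | x ∈ P ∧ ∀ y ∈ P, projTo d (d - 1) y = projTo d (d - 1) x → lastCoord d y ≤ lastCoord d x}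

/-- `i(P,m)`: the number of lattice points in the dilate `mP`. -/
def ehr (d : ℕ) (P : Set (Fin d → ℝ)) (m : ℕ) : ℕ :=
  (latticePts d ∩ (fun x => (m : ℝ) • x) '' P).ncard

/-- `î(P,m)`: the number of lattice points in the interior of the dilate `mP`. -/
def intEhr (d : ℕ) (P : Set (Fin d → ℝ)) (m : ℕ) : ℕ :=
  (latticePts d ∩ interior ((fun x => (m : ℝ) • x) '' P)).ncard

/-- The `j`-th coordinate (`0`-indexed) of a point of `ℝ^d`, junk value `0` if `j ≥ d`. -/
def coordN {d : ℕ} (w : Fin d → ℝ) (j : ℕ) : ℝ := if h : j < d then w ⟨j, h⟩ else 0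

/-- The vertex occurring in row `p` (0-indexed) of the matrices `X(σ,k)`, `Y(σ,k)`:
vertex `v_{σ(p+1)}` for `p < k`, and `v_{d+1}` for the last row of `X(σ,k)`. -/
def rowVert (d : ℕ) (v : Fin (d + 1) → Fin d → ℝ) (σ : Equiv.Perm (Fin d)) (k p : ℕ) :
    Fin d → ℝ :=
  if h : p < k ∧ p < d then v (Fin.castSucc (σ ⟨p, h.2⟩)) else v (Fin.last d)

/-- The matrix `X(σ,k)` with rows `(1, x_{σ(i),1},…,x_{σ(i),k})` for `1 ≤ i ≤ k`
followed by `(1, x_{d+1,1},…,x_{d+1,k})`. -/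
def Xmat (d : ℕ) (v : Fin (d + 1) → Fin d → ℝ) (σ : Equiv.Perm (Fin d)) (k : ℕ) :
    Matrix (Fin (k + 1)) (Fin (k + 1)) ℝ :=
  Matrix.of fun p q =>
    if (q : ℕ) = 0 then 1 else coordN (rowVert d v σ k (p : ℕ)) ((q : ℕ) - 1)

/-- The matrix `Y(σ,k)` with rows `(1, x_{σ(i),1},…,x_{σ(i),k-1})` for `1 ≤ i ≤ k`. -/
def Ymat (d : ℕ) (v : Fin (d + 1) → Fin d → ℝ) (σ : Equiv.Perm (Fin d)) (k : ℕ) :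
    Matrix (Fin k) (Fin k) ℝ :=
  Matrix.of fun p q =>
    if (q : ℕ) = 0 then 1 else coordN (rowVert d v σ k (p : ℕ)) ((q : ℕ) - 1)

/-- The matrix `X̃(σ,k;x)`: `X(σ,k)` with its last row replaced by `(1, x_1,…,x_k)`. -/
def Xtil (d : ℕ) (v : Fin (d + 1) → Fin d → ℝ) (σ : Equiv.Perm (Fin d)) (k : ℕ)
    (x : Fin d → ℝ) : Matrix (Fin (k + 1)) (Fin (k + 1)) ℝ :=
  Matrix.of fun p q =>
    if (q : ℕ) = 0 then 1
    else if (p : ℕ) < k then coordN (rowVert d v σ k (p : ℕ)) ((q : ℕ) - 1)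
    else coordN x ((q : ℕ) - 1)

/-- `z(σ,k) = det X(σ,k) / det Y(σ,k)`; note `z(σ,0) = 1`. -/
def zc (d : ℕ) (v : Fin (d + 1) → Fin d → ℝ) (σ : Equiv.Perm (Fin d)) (k : ℕ) : ℝ :=
  (Xmat d v σ k).det / (Ymat d v σ k).det

/-- The minor `m(σ,k;j)` of `X̃(σ,k;x)` obtained by deleting the last row and the
`(j+1)`-st column (it does not depend on `x`). -/
def minorM (d : ℕ) (v : Fin (d + 1) → Fin d → ℝ) (σ : Equiv.Perm (Fin d)) (k j : ℕ) : ℝ :=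
  (Matrix.of fun p q : Fin k =>
    Xmat d v σ k (Fin.castSucc p) (if (q : ℕ) < j + 1 then Fin.castSucc q else q.succ)).det

/-- A `d`-simplex with vertices `v_1, …, v_{d+1}` is in general position if its vertices
are affinely independent and for every `0 ≤ k ≤ d-1` and every `(k+1)`-subset `U` of the
vertex set, `π^{(d-k)}(conv U)` is a `k`-simplex. -/
def SimplexGenPos (d : ℕ) (v : Fin (d + 1) → Fin d → ℝ) : Prop :=
  AffineIndependent ℝ v ∧
    ∀ k : ℕ, k < d → ∀ U : Finset (Fin (d + 1)), U.card = k + 1 →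
      affineSpan ℝ (projTo d k '' (v '' (U : Set (Fin (d + 1))))) = ⊤

/-- A lattice-face `d`-simplex, given by its `d+1` affinely independent vertices. -/
def SimplexLatticeFace (d : ℕ) (v : Fin (d + 1) → Fin d → ℝ) : Prop :=
  AffineIndependent ℝ v ∧
    ∀ k : ℕ, k < d → ∀ U : Finset (Fin (d + 1)), U.card = k + 1 →
      projTo d k ''
          ((affineSpan ℝ (v '' (U : Set (Fin (d + 1)))) : Set (Fin d → ℝ)) ∩ latticePts d)
        = latticePts k

open scoped Classical in
/-- The sign of a facet `F` of `P`: `+1` if `F` has a relative-interior point on the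
positive boundary, `-1` if on the negative boundary, `0` otherwise. -/
def facetSign (d : ℕ) (P F : Set (Fin d → ℝ)) : ℝ :=
  if ∃ x ∈ intrinsicInterior ℝ F, x ∈ PB d P then 1
  else if ∃ x ∈ intrinsicInterior ℝ F, x ∈ NB d P then -1
  else 0

/-- The Bernoulli polynomial `B_n(x)`, as a real polynomial. -/
def bernR (n : ℕ) : Polynomial ℝ := (Polynomial.bernoulli n).map (algebraMap ℚ ℝ)

/-- The `k`-th power sum polynomial `P_k(x) = (B_{k+1}(x+1) - B_{k+1}(0))/(k+1)`. -/
def PkR (k : ℕ) : Polynomial ℝ :=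
  Polynomial.C (((k : ℝ) + 1)⁻¹) *
    ((bernR (k + 1)).comp (Polynomial.X + 1) - Polynomial.C ((bernR (k + 1)).eval 0))

/-- The extension of the summation operation: for a polynomial `h(s) = Σ_k h_k s^k`,
`Σ_{s=1}^{u} h := h_0 u + Σ_{k ≥ 1} h_k P_k(u)`, as a polynomial in the upper bound `u`. -/
def extSumPoly (h : Polynomial ℝ) : Polynomial ℝ :=
  Polynomial.C (h.coeff 0) * Polynomial.X +
    ∑ k ∈ Finset.Icc 1 h.natDegree, Polynomial.C (h.coeff k) * PkR k

/-- `fdPoly n a` is the polynomial (in the first variable `a_1`) expressing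
`f_{n+1}(a_1, a 0, a 1, …)`, defined recursively by `f_1(a_1) = a_1` and
`f_d(a_1,…,a_d) = Σ_{s=1}^{a_1} f_{d-1}(a_2 s, a_3, …, a_d)` using the extended sum. -/
def fdPoly : ℕ → (ℕ → ℝ) → Polynomial ℝ
  | 0, _ => Polynomial.X
  | n + 1, a =>
      extSumPoly ((fdPoly n (fun i => a (i + 1))).comp (Polynomial.C (a 0) * Polynomial.X))

/-- `f_d(a_1, …, a_d)` where `a_k = a (k-1)` (0-indexed). -/
def fd (d : ℕ) (a : ℕ → ℝ) : ℝ := (fdPoly (d - 1) (fun i => a (i + 1))).eval (a 0)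

/-- `g_d(b_1, …, b_d) = f_d(b_1/b_0, b_2/b_1, …, b_d/b_{d-1})` where `b_k = b k` and
`b 0 = 1` by convention. -/
def gd (d : ℕ) (b : ℕ → ℝ) : ℝ := fd d (fun i => b (i + 1) / b i)

/-- `x̄` for an integer: `x̄ = x` if `x ≥ 0` and `x̄ = -x-1` if `x < 0`. -/
def barNat (n : ℤ) : ℕ := if 0 ≤ n then n.toNat else (-n - 1).toNat

/-- The half-open segment `Ω(conv(0,x))`: `(0,x]` if `x ≥ 0` and `(x,0]` if `x < 0`. -/
def hoSeg (x : ℝ) : Set ℝ := if 0 ≤ x then Set.Ioc 0 x else Set.Ioc x 0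

/-- The previous coordinate `s_{k-1}` of a point `s ∈ ℝ^d`, with `s_0 = 1`. -/
def sPrev (d : ℕ) (s : Fin d → ℝ) (k : Fin d) : ℝ :=
  if (k : ℕ) = 0 then 1 else s ⟨(k : ℕ) - 1, lt_of_le_of_lt (Nat.sub_le _ _) k.isLt⟩

/-- The nested sum `Σ_{s_1=1}^{⌊a_1 sp⌋¯} Σ_{s_2=1}^{⌊a_2 s_1⌋¯} ⋯ 1` over positive
integers. -/
def nestedCount : ℕ → (ℕ → ℝ) → ℕ → ℕ
  | 0, _, _ => 1
  | n + 1, a, sp =>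
      ∑ s ∈ Finset.Icc 1 (barNat ⌊a 0 * (sp : ℝ)⌋), nestedCount n (fun i => a (i + 1)) s

/-- The nested extended sum `Σ_{s_1=1}^{\bar{a_1 s_0}} ⋯ Σ_{s_d=1}^{\bar{a_d s_{d-1}}} 1`,
as a polynomial in `s_0`, where for positive `s` the bar is `a s` if `a > 0` and
`-a s - 1` if `a < 0`. -/
def barNested : ℕ → (ℕ → ℝ) → Polynomial ℝ
  | 0, _ => 1
  | n + 1, a =>
      (extSumPoly (barNested n (fun i => a (i + 1)))).comp
        (if 0 < a 0 then Polynomial.C (a 0) * Polynomial.X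
         else -(Polynomial.C (a 0) * Polynomial.X) - 1)

/-- Row vertex for the hat matrices: `v_{σ(p+1)}` for `p < d`. -/
def rowVert' (d : ℕ) (v : Fin (d + 1) → Fin d → ℝ) (σ : Equiv.Perm (Fin d)) (p : ℕ) :
    Fin d → ℝ :=
  if h : p < d then v (Fin.castSucc (σ ⟨p, h⟩)) else v (Fin.last d)

/-- The matrix `X̂(σ,k)` with entries `x̂_{σ(p),q} = x_{σ(p),q} - x_{d+1,q}`. -/
def XhatM (d : ℕ) (v : Fin (d + 1) → Fin d → ℝ) (σ : Equiv.Perm (Fin d)) (k : ℕ) :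
    Matrix (Fin k) (Fin k) ℝ :=
  Matrix.of fun p q =>
    coordN (rowVert' d v σ (p : ℕ)) (q : ℕ) - coordN (v (Fin.last d)) (q : ℕ)

/-- The matrix `Ŷ(σ,k)` with rows `(1, x̂_{σ(p),1},…,x̂_{σ(p),k-1})`. -/
def YhatM (d : ℕ) (v : Fin (d + 1) → Fin d → ℝ) (σ : Equiv.Perm (Fin d)) (k : ℕ) :
    Matrix (Fin k) (Fin k) ℝ :=
  Matrix.of fun p q =>
    if (q : ℕ) = 0 then 1
    else coordN (rowVert' d v σ (p : ℕ)) ((q : ℕ) - 1) - coordN (v (Fin.last d)) ((q : ℕ) - 1)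

/-- `ẑ(σ,k) = det X̂(σ,k) / det Ŷ(σ,k)`. -/
def zhat (d : ℕ) (v : Fin (d + 1) → Fin d → ℝ) (σ : Equiv.Perm (Fin d)) (k : ℕ) : ℝ :=
  (XhatM d v σ k).det / (YhatM d v σ k).det

end

/-!
Generalise `s_0 = 1` to an arbitrary integer `c` of the sign of `b_0` and peel off the first
coordinate. The integer candidates for `s_1` are those of `Ω(conv(0, a_1' c))`; they have the
sign of `b_1`, so `s_1 ↦ |s_1|` matches them with `1, …, ⌊a_1 |c|⌋¯`, the one exception being
`s_1 = 0` when `b_1 < 0`. That candidate contributes nothing: the next segment `Ω(conv(0, 0))`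
is empty, and there is a next coordinate because `b_d > 0`.
-/

/-- `Fin.cons c s k.castSucc` is `s_{k-1}`, with `s_0 = c`. -/
def nestedLatticeSet (n : ℕ) (r : ℕ → ℝ) (c : ℝ) : Set (Fin n → ℝ) :=
  latticePts n ∩
    {s | ∀ k : Fin n, s k ∈ hoSeg (r k * (Fin.cons c s : Fin (n + 1) → ℝ) k.castSucc)}

lemma sPrev_eq_cons (d : ℕ) (s : Fin d → ℝ) (k : Fin d) :
    sPrev d s k = (Fin.cons 1 s : Fin (d + 1) → ℝ) k.castSucc := by
  rcases k with ⟨_ | j, hj⟩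
  · rfl
  · exact Fin.cons_succ (α := fun _ => ℝ) 1 s ⟨j, by omega⟩ |>.symm

lemma intCast_preimage_hoSeg_of_nonneg {x : ℝ} (hx : 0 ≤ x) :
    (Int.cast ⁻¹' hoSeg x : Set ℤ) = Set.Icc 1 ⌊x⌋ := by
  ext m
  simp [hoSeg, hx, Int.le_floor, Order.one_le_iff_pos]

lemma intCast_preimage_hoSeg_of_neg {x : ℝ} (hx : x < 0) :
    (Int.cast ⁻¹' hoSeg x : Set ℤ) = Set.Icc (⌊x⌋ + 1) 0 := by
  ext m
  simp [hoSeg, hx.not_ge]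

lemma finite_intCast_preimage_hoSeg (x : ℝ) : (Int.cast ⁻¹' hoSeg x : Set ℤ).Finite := by
  rcases le_or_gt 0 x with hx | hx
  · rw [intCast_preimage_hoSeg_of_nonneg hx]; exact Set.finite_Icc _ _
  · rw [intCast_preimage_hoSeg_of_neg hx]; exact Set.finite_Icc _ _

lemma mul_nonneg_of_mem_hoSeg_mul {y u t : ℝ} (ht : 0 ≤ t) (hy : y ∈ hoSeg (u * t)) :
    0 ≤ y * u := by
  unfold hoSeg at hy
  split_ifs at hy with h
  · have hu : 0 < u := pos_of_mul_pos_left (hy.1.trans_le hy.2) ht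
    exact mul_nonneg hy.1.le hu.le
  · have hu : u < 0 := by
      by_contra! hu; exact h (mul_nonneg hu ht)
    exact mul_nonneg_of_nonpos_of_nonpos hy.2 hu.le

lemma finsum_mem_hoSeg_natAbs {M : Type*} [AddCommMonoid M] (x : ℝ) (f : ℕ → M)
    (hf : x < 0 → f 0 = 0) :
    ∑ᶠ m ∈ (Int.cast ⁻¹' hoSeg x : Set ℤ), f m.natAbs
      = ∑ s ∈ Finset.Icc 1 (barNat ⌊x⌋), f s := by
  rcases le_or_gt 0 x with hx | hx
  · have hbar : barNat ⌊x⌋ = ⌊x⌋.toNat := by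
      rw [barNat, if_pos (Int.floor_nonneg.mpr hx)]
    rw [intCast_preimage_hoSeg_of_nonneg hx, ← Finset.coe_Icc, finsum_mem_coe_finset, hbar]
    exact Finset.sum_nbij' Int.natAbs Nat.cast (by intro m; simp only [Finset.mem_Icc]; omega)
      (by intro m; simp only [Finset.mem_Icc]; omega)
      (by intro m; simp only [Finset.mem_Icc]; omega)
      (by simp) (fun _ _ => rfl)
  · have hfloor : ⌊x⌋ < 0 := Int.floor_lt.mpr (by exact_mod_cast hx)
    have hbar : barNat ⌊x⌋ = (-⌊x⌋ - 1).toNat := by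
      rw [barNat, if_neg hfloor.not_ge]
    have hIcc : Finset.Icc (⌊x⌋ + 1) 0 = insert 0 (Finset.Icc (⌊x⌋ + 1) (-1)) := by
      ext m; simp only [Finset.mem_Icc, Finset.mem_insert]; omega
    rw [intCast_preimage_hoSeg_of_neg hx, ← Finset.coe_Icc, finsum_mem_coe_finset, hIcc,
      Finset.sum_insert (by simp), Int.natAbs_zero, hf hx, zero_add, hbar]
    exact Finset.sum_nbij' Int.natAbs (fun s => -(s : ℤ))
      (by intro m; simp only [Finset.mem_Icc]; omega)
      (by intro m; simp only [Finset.mem_Icc]; omega)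
      (by intro m; simp only [Finset.mem_Icc]; omega) (by simp) (fun _ _ => rfl)

lemma nestedLatticeSet_succ (n : ℕ) (r : ℕ → ℝ) (c : ℝ) :
    nestedLatticeSet (n + 1) r c =
      ⋃ m ∈ (Int.cast ⁻¹' hoSeg (r 0 * c) : Set ℤ),
        Fin.cons (m : ℝ) '' nestedLatticeSet n (fun i => r (i + 1)) m := by
  ext s
  obtain ⟨x, s', rfl⟩ : ∃ x s', s = Fin.cons x s' :=
    ⟨s 0, Fin.tail s, (Fin.cons_self_tail s).symm⟩
  simp only [nestedLatticeSet, latticePts, Fin.forall_fin_succ, Fin.castSucc_zero, Fin.cons_zero,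
    Fin.val_zero, Fin.val_succ, Fin.castSucc_succ, Fin.cons_succ, Set.mem_inter_iff,
    Set.mem_ofPred_eq, Set.mem_preimage, Set.mem_iUnion, Set.mem_image, Fin.cons_inj,
    exists_eq_right_right, exists_prop]
  constructor
  · rintro ⟨⟨⟨m, rfl⟩, hlattice⟩, hm, hs'⟩
    exact ⟨m, hm, ⟨hlattice, hs'⟩, rfl⟩
  · rintro ⟨m, hm, ⟨hlattice, hs'⟩, rfl⟩
    exact ⟨⟨⟨m, rfl⟩, hlattice⟩, hm, hs'⟩

lemma encard_nestedLatticeSet_succ (n : ℕ) (r : ℕ → ℝ) (c : ℝ) :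
    (nestedLatticeSet (n + 1) r c).encard =
      ∑ᶠ m ∈ (Int.cast ⁻¹' hoSeg (r 0 * c) : Set ℤ),
        (nestedLatticeSet n (fun i => r (i + 1)) m).encard := by
  rw [nestedLatticeSet_succ, (finite_intCast_preimage_hoSeg _).encard_biUnion]
  · exact finsum_mem_congr rfl fun m _ => (Fin.cons_right_injective _).encard_image _
  · intro m _ m' _ hne
    refine Set.disjoint_left.mpr ?_
    rintro _ ⟨s, _, rfl⟩ ⟨s', _, hs⟩
    exact hne (by simpa using (congrFun hs 0).symm)

lemma div_mul_eq_div_abs_mul_abs {a b c : ℝ} (h : 0 ≤ c * b) : a / b * c = a / |b| * |c| := by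
  rcases lt_trichotomy b 0 with hb | rfl | hb
  · rw [abs_of_neg hb, abs_of_nonpos (nonpos_of_mul_nonneg_left h hb), div_neg, neg_mul_neg]
  · simp
  · rw [abs_of_pos hb, abs_of_nonneg (nonneg_of_mul_nonneg_left h hb)]

/-- Counting with `encard` keeps finiteness out of the induction. -/
theorem encard_nestedLatticeSet (n : ℕ) (b : ℕ → ℝ) (hbn : 0 < b n) (c : ℤ)
    (hc : 0 ≤ c * b 0) :
    (nestedLatticeSet n (fun i => b (i + 1) / b i) c).encard
      = nestedCount n (fun i => b (i + 1) / |b i|) c.natAbs := by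
  induction n generalizing b c with
  | zero => simp [nestedLatticeSet, nestedCount, latticePts]
  | succ n ih =>
    have hx : b 1 / b 0 * c = b 1 / |b 0| * (c.natAbs : ℝ) := by
      rw [div_mul_eq_div_abs_mul_abs hc, Nat.cast_natAbs, Int.cast_abs]
    have hzero (hneg : b 1 / |b 0| * (c.natAbs : ℝ) < 0) :
        (nestedCount n (fun i => b (i + 1 + 1) / |b (i + 1)|) 0 : ℕ∞) = 0 := by
      rcases n with _ | n
      · have hb1 : 0 ≤ b 1 / |b 0| := div_nonneg hbn.le (abs_nonneg _)
        exact absurd hneg (mul_nonneg hb1 (Nat.cast_nonneg _)).not_gt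
      · simp [nestedCount, barNat]
    rw [encard_nestedLatticeSet_succ, nestedCount, Nat.cast_sum, hx,
      ← finsum_mem_hoSeg_natAbs _ _ hzero]
    refine finsum_mem_congr rfl fun m hm => ih (fun i => b (i + 1)) hbn m ?_
    rw [Set.mem_preimage, div_mul_eq_mul_div, mul_div_assoc] at hm
    exact mul_nonneg_of_mem_hoSeg_mul (by positivity) hm

theorem card_latticePts_of_nested_halfopen_set_general
    (d : ℕ) (b : ℕ → ℝ) (hb0 : b 0 = 1) (hbd : 0 < b d) :
    (latticePts d ∩ {s : Fin d → ℝ | ∀ k : Fin d,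
        s k ∈ hoSeg (b ((k : ℕ) + 1) / b (k : ℕ) * sPrev d s k)}).ncard
      = nestedCount d (fun i => b (i + 1) / |b i|) 1 := by
  have h := encard_nestedLatticeSet d b hbd 1 (by simp [hb0])
  rw [Int.cast_one, Int.natAbs_one] at h
  simp_rw [Set.ncard_def, sPrev_eq_cons]
  exact congrArg ENat.toNat h

theorem card_latticePts_of_nested_halfopen_set
    (d : ℕ) (hd : 1 ≤ d) (b : ℕ → ℝ) (hb0 : b 0 = 1)
    (hbne : ∀ k, 1 ≤ k → k ≤ d → b k ≠ 0) (hbd : 0 < b d) :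
    (latticePts d ∩ {s : Fin d → ℝ | ∀ k : Fin d,
        s k ∈ hoSeg (b ((k : ℕ) + 1) / b (k : ℕ) * sPrev d s k)}).ncard
      = nestedCount d (fun i => b (i + 1) / |b i|) 1 :=
  card_latticePts_of_nested_halfopen_set_general d b hb0 hbd
end

section
/- For every d ≥ 1 and fixed real numbers a_2,…,a_d, the function a_1 ↦ f_d(a_1, a_2, …, a_d) is a polynomial in a_1 of degree d with zero constant term, and the product a_1 a_2 ⋯ a_d divides f_d; precisely, f_d(a_1,…,a_d) = Σ_{k=1}^{d} f_{d,k}(a_2,…,a_d) a_1^k, where each coefficient f_{d,k}(a_2,…,a_d) is a polynomial in a_2,…,a_d having a_2 a_3 ⋯ a_d as a factor. -/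
open MeasureTheory Polynomial

/-! The recursion only ever applies the extended sum to polynomials in `a_1` whose coefficients
are polynomial in the remaining variables, so `f_{n+1}` is the specialization of one universal
polynomial `fdUniv n ∈ ℝ[a_2, …, a_{n+1}][a_1]`. If `f_{n+1}(x, b_2, …, b_{n+1})` is divisible by
`x b_2 ⋯ b_{n+1}`, then `f_{n+1}(a_2 s, a_3, …, a_{n+2})` is divisible by `s a_2 ⋯ a_{n+2}`, and
since every power sum `Σ_{s=1}^u s^k` vanishes at `u = 0`, summing over `s` up to `a_1` yields a
multiple of `a_1 a_2 ⋯ a_{n+2}`. The power sum of `s^k` has degree `k + 1` and leading coefficient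
`1/(k+1)`, which gives the degree `n + 1` of `f_{n+1}` in `a_1` with leading coefficient
`a_2^n a_3^{n-1} ⋯ a_{n+1} / (n+1)!`. -/

noncomputable section PowerSums

lemma natDegree_comp_C_mul_X_le {R : Type*} [CommSemiring R] (p : R[X]) (r : R) :
    (p.comp (C r * X)).natDegree ≤ p.natDegree :=
  natDegree_le_iff_coeff_eq_zero.2 fun k hk => by
    rw [comp_C_mul_X_coeff, coeff_eq_zero_of_natDegree_lt hk, zero_mul]

lemma coeff_bernR (n i : ℕ) :
    (bernR n).coeff i = if i ≤ n then (_root_.bernoulli (n - i) * n.choose i : ℝ) else 0 := by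
  rw [bernR, coeff_map, Polynomial.coeff_bernoulli]
  split_ifs <;> simp

lemma natDegree_bernR_le (n : ℕ) : (bernR n).natDegree ≤ n :=
  natDegree_le_iff_coeff_eq_zero.2 fun i hi => by rw [coeff_bernR, if_neg (by omega)]

lemma PkR_eq (k : ℕ) :
    PkR k = C ((k : ℝ) + 1)⁻¹ * (bernR (k + 1) - C ((bernR (k + 1)).eval 0)) + X ^ k := by
  have hshift : (bernR (k + 1)).comp (X + 1) = bernR (k + 1) + C ((k : ℝ) + 1) * X ^ k := by
    have := congrArg (map (algebraMap ℚ ℝ)) (Polynomial.bernoulli_comp_one_add_X (k + 1))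
    simpa [bernR, map_comp, add_comm, nsmul_eq_mul] using this
  have hk : ((k : ℝ) + 1) ≠ 0 := by positivity
  rw [PkR, hshift, add_sub_right_comm, mul_add, ← mul_assoc, ← C_mul, inv_mul_cancel₀ hk, C_1,
    one_mul]

lemma coeff_PkR_zero {k : ℕ} (hk : k ≠ 0) : (PkR k).coeff 0 = 0 := by
  simp [PkR_eq, coeff_zero_eq_eval_zero, hk]

lemma natDegree_PkR_le (k : ℕ) : (PkR k).natDegree ≤ k + 1 := by
  rw [PkR_eq]
  refine (natDegree_add_le _ _).trans (max_le ((natDegree_C_mul_le _ _).trans ?_) ?_)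
  · exact (natDegree_sub_C).le.trans (natDegree_bernR_le _)
  · simp

lemma coeff_PkR_succ (k : ℕ) : (PkR k).coeff (k + 1) = ((k : ℝ) + 1)⁻¹ := by
  simp [PkR_eq, coeff_bernR, coeff_X_pow]

-- `PkR 0 = X + 1` rather than `X` (Mathlib's `B₁(x) = x - 1/2`), which is why `extSumPoly`
-- treats the constant term of the summand separately.
def powSumPoly (k : ℕ) : ℝ[X] := if k = 0 then X else PkR k

lemma coeff_powSumPoly_zero (k : ℕ) : (powSumPoly k).coeff 0 = 0 := by
  unfold powSumPoly
  split_ifs with hk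
  · simp
  · exact coeff_PkR_zero hk

lemma natDegree_powSumPoly_le (k : ℕ) : (powSumPoly k).natDegree ≤ k + 1 := by
  unfold powSumPoly
  split_ifs
  · simp
  · exact natDegree_PkR_le k

lemma coeff_powSumPoly_succ (k : ℕ) : (powSumPoly k).coeff (k + 1) = ((k : ℝ) + 1)⁻¹ := by
  unfold powSumPoly
  split_ifs with hk
  · simp [hk]
  · exact coeff_PkR_succ k

variable {R S : Type*} [CommSemiring R] [Algebra ℝ R] [CommSemiring S] [Algebra ℝ S]

/-- Unlike `extSumPoly`, this is defined without reference to `natDegree`, so it commutes with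
coefficient maps that may lower the degree. -/
def extSum (p : R[X]) : R[X] :=
  p.sum fun k c => C c * (powSumPoly k).map (algebraMap ℝ R)

lemma extSumPoly_eq_extSum (h : ℝ[X]) : extSumPoly h = extSum h := by
  rw [extSum, sum_over_range _ (by simp), Finset.range_eq_Ico,
    Finset.sum_eq_sum_Ico_succ_bot (Nat.succ_pos _), Nat.succ_eq_add_one, zero_add,
    Finset.Ico_add_one_right_eq_Icc, extSumPoly]
  simp only [Algebra.algebraMap_self, Polynomial.map_id]
  congr 1
  refine Finset.sum_congr rfl fun k hk => ?_
  rw [powSumPoly, if_neg (by simp at hk; omega)]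

lemma extSum_map (f : R →ₐ[ℝ] S) (p : R[X]) :
    extSum (p.map (f : R →+* S)) = (extSum p).map (f : R →+* S) := by
  have hf : (f : R →+* S).comp (algebraMap ℝ R) = algebraMap ℝ S := f.comp_algebraMap
  rw [extSum, extSum, sum_over_range' _ (by simp) _ (Nat.lt_succ_of_le (natDegree_map_le)),
    sum_over_range' _ (by simp) (p.natDegree + 1) (Nat.lt_succ_self _), Polynomial.map_sum]
  simp [Polynomial.map_map, hf]

lemma extSum_C_mul (r : R) (p : R[X]) : extSum (C r * p) = C r * extSum p := by
  rw [extSum, extSum, C_mul', sum_smul_index _ _ _ (by simp), sum_def, sum_def, Finset.mul_sum]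
  simp [mul_assoc]

lemma X_dvd_extSum (p : R[X]) : X ∣ extSum p :=
  Finset.dvd_sum fun k _ => dvd_mul_of_dvd_right (X_dvd_iff.2 (by
    simp [coeff_map, coeff_powSumPoly_zero])) _

lemma natDegree_extSum_le (p : R[X]) : (extSum p).natDegree ≤ p.natDegree + 1 := by
  refine natDegree_sum_le_of_forall_le _ _ fun k hk => (natDegree_C_mul_le _ _).trans ?_
  exact natDegree_map_le.trans ((natDegree_powSumPoly_le k).trans
    (Nat.succ_le_succ (le_natDegree_of_mem_supp k hk)))

lemma coeff_extSum_succ {p : R[X]} {N : ℕ} (hp : p.natDegree ≤ N) :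
    (extSum p).coeff (N + 1) = algebraMap ℝ R ((N : ℝ) + 1)⁻¹ * p.coeff N := by
  rw [extSum, coeff_sum, sum_over_range' _ (by simp) (N + 1) (Nat.lt_succ_of_le hp),
    Finset.sum_range_succ, Finset.sum_eq_zero]
  · simp [coeff_map, coeff_powSumPoly_succ, mul_comm]
  · intro k hk
    have hk : k + 1 < N + 1 := by simp at hk; omega
    rw [coeff_C_mul, coeff_map,
      coeff_eq_zero_of_natDegree_lt ((natDegree_powSumPoly_le k).trans_lt hk), map_zero, mul_zero]

end PowerSums

noncomputable section Universal

def fdUniv : (n : ℕ) → (MvPolynomial (Fin n) ℝ)[X]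
  | 0 => X
  | n + 1 =>
      extSum (((fdUniv n).map (MvPolynomial.rename Fin.succ).toRingHom).comp
        (C (MvPolynomial.X 0) * X))

lemma fdPoly_eq_map_fdUniv (n : ℕ) (a : ℕ → ℝ) :
    fdPoly n a = (fdUniv n).map (MvPolynomial.eval fun i : Fin n => a i) := by
  induction n generalizing a with
  | zero => simp [fdPoly, fdUniv]
  | succ n ih =>
    have hrename : (MvPolynomial.eval fun i : Fin (n + 1) => a i).comp
        (MvPolynomial.rename Fin.succ).toRingHom =
          MvPolynomial.eval fun i : Fin n => a (i + 1) := by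
      ext <;> simp
    rw [fdPoly, fdUniv, ih, extSumPoly_eq_extSum,
      ← MvPolynomial.coe_aeval_eq_eval (fun i : Fin (n + 1) => a i), ← extSum_map,
      MvPolynomial.coe_aeval_eq_eval, map_comp, map_map, hrename]
    simp

lemma C_prod_X_mul_X_dvd_fdUniv (n : ℕ) : C (∏ i, MvPolynomial.X i) * X ∣ fdUniv n := by
  induction n with
  | zero => simp [fdUniv]
  | succ n ih =>
    obtain ⟨q, hq⟩ := ih
    set ρ : MvPolynomial (Fin n) ℝ →+* MvPolynomial (Fin (n + 1)) ℝ :=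
      (MvPolynomial.rename Fin.succ).toRingHom
    set Q := ∏ i : Fin n, (MvPolynomial.X i : MvPolynomial (Fin n) ℝ)
    have hprod : ∏ i : Fin (n + 1), (MvPolynomial.X i : MvPolynomial (Fin (n + 1)) ℝ) =
        ρ Q * MvPolynomial.X 0 := by
      simp [ρ, Q, Fin.prod_univ_succ, map_prod, mul_comm]
    have hcomp : ((C Q * X * q).map ρ).comp (C (MvPolynomial.X 0) * X) =
        C (ρ Q * MvPolynomial.X 0) * (X * (q.map ρ).comp (C (MvPolynomial.X 0) * X)) := by
      simp only [Polynomial.map_mul, map_C, map_X, mul_comp, C_comp, X_comp, C_mul]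
      ring
    rw [fdUniv, hq, hcomp, extSum_C_mul, hprod]
    exact mul_dvd_mul_left _ (X_dvd_extSum _)

lemma natDegree_fdUniv_le (n : ℕ) : (fdUniv n).natDegree ≤ n + 1 := by
  induction n with
  | zero => simp [fdUniv]
  | succ n ih =>
    exact (natDegree_extSum_le _).trans (Nat.succ_le_succ
      ((natDegree_comp_C_mul_X_le _ _).trans (natDegree_map_le.trans ih)))

open Nat in
lemma coeff_fdUniv_succ (n : ℕ) :
    (fdUniv n).coeff (n + 1) =
      MvPolynomial.C ((n + 1)! : ℝ)⁻¹ * ∏ i : Fin n, MvPolynomial.X i ^ (n - i) := by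
  induction n with
  | zero => simp [fdUniv]
  | succ n ih =>
    rw [fdUniv, coeff_extSum_succ ((natDegree_comp_C_mul_X_le _ _).trans
      (natDegree_map_le.trans (natDegree_fdUniv_le n))), comp_C_mul_X_coeff, coeff_map, ih]
    simp only [Fin.prod_univ_succ, map_mul, map_prod, map_pow, AlgHom.toRingHom_eq_coe,
      RingHom.coe_coe, MvPolynomial.rename_C, MvPolynomial.rename_X, MvPolynomial.algebraMap_eq,
      Nat.factorial_succ (n + 1)]
    push_cast
    simp only [Fin.val_zero, Fin.val_succ, Nat.sub_zero, Nat.add_sub_add_right, mul_inv, map_mul]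
    ring

end Universal

lemma eval_fdPoly (n : ℕ) (a : ℕ → ℝ) (x : ℝ) :
    (fdPoly n a).eval x = ∑ k : Fin (n + 1),
      MvPolynomial.eval (fun i : Fin n => a i) ((fdUniv n).coeff (k + 1)) *
        x ^ ((k : ℕ) + 1) := by
  have hcoeff0 : (fdUniv n).coeff 0 = 0 :=
    X_dvd_iff.1 (dvd_of_mul_left_dvd (C_prod_X_mul_X_dvd_fdUniv n))
  rw [fdPoly_eq_map_fdUniv, eval_eq_sum_range' (n := n + 2)
      (Nat.lt_succ_of_le (natDegree_map_le.trans (natDegree_fdUniv_le n))),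
    Finset.sum_range_succ', coeff_map, hcoeff0, map_zero, zero_mul, add_zero,
    Fin.sum_univ_eq_sum_range (fun k => MvPolynomial.eval (fun i : Fin n => a i)
      ((fdUniv n).coeff (k + 1)) * x ^ (k + 1))]
  simp only [coeff_map]

theorem fd_is_polynomial_with_factor
    (d : ℕ) (hd : 1 ≤ d) :
    ∃ c : Fin d → MvPolynomial (Fin (d - 1)) ℝ,
      (∀ k : Fin d, (∏ i : Fin (d - 1), MvPolynomial.X i) ∣ c k)
      ∧ (∀ a : ℕ → ℝ,
          fd d a = ∑ k : Fin d,
            MvPolynomial.eval (fun i : Fin (d - 1) => a ((i : ℕ) + 1)) (c k)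
              * a 0 ^ ((k : ℕ) + 1))
      ∧ (∀ a : ℕ → ℝ, (∀ i : ℕ, 1 ≤ i → i ≤ d - 1 → a i ≠ 0) →
          (fdPoly (d - 1) (fun i => a (i + 1))).natDegree = d) := by
  obtain ⟨n, rfl⟩ : ∃ n, d = n + 1 := ⟨d - 1, by omega⟩
  simp only [Nat.add_sub_cancel]
  refine ⟨fun k => (fdUniv n).coeff (k + 1), fun k => ?_, fun a => eval_fdPoly n _ (a 0),
    fun a ha => ?_⟩
  · exact (C_dvd_iff_dvd_coeff _ _).1 (dvd_of_mul_right_dvd (C_prod_X_mul_X_dvd_fdUniv n)) _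
  · rw [fdPoly_eq_map_fdUniv]
    refine natDegree_eq_of_le_of_coeff_ne_zero (natDegree_map_le.trans (natDegree_fdUniv_le n)) ?_
    rw [coeff_map, coeff_fdUniv_succ]
    simp only [map_mul, map_prod, map_pow, MvPolynomial.eval_C, MvPolynomial.eval_X]
    exact mul_ne_zero (by positivity) (Finset.prod_ne_zero_iff.2 fun i _ =>
      pow_ne_zero _ (ha (i + 1) (by omega) (by omega)))
end

section
/- For every d ≥ 2 and every (a_1, a_2, …, a_d) ∈ ℝ^d, the function f_d satisfies f_d(a_1, a_2, a_3, …, a_d) = −f_d(−a_1 − 1, −a_2, a_3, …, a_d). -/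
open MeasureTheory Polynomial

/-! The extended sum `S(u) = Σ_{s=1}^{u} h` is the unique polynomial with `S(0) = 0` and
`S(u) - S(u-1) = h(u)`. When `h(0) = 0`, the polynomial `-S'(-u-1)`, where `S'` is the extended
sum of `h(-s)`, satisfies the same two conditions, so `Σ_{s=1}^{u} h(s) = -Σ_{s=1}^{-u-1} h(-s)`.
Applied to `h(s) = f_{d-1}(a_2 s, a_3, …, a_d)`, which vanishes at `s = 0`, this is the theorem. -/

lemma bernR_eval_add_one (n : ℕ) (x : ℝ) :
    (bernR n).eval (x + 1) = (bernR n).eval x + n * x ^ (n - 1) := by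
  simpa [bernR, map_comp, eval_comp, add_comm] using
    congr(eval x (map (algebraMap ℚ ℝ) $(bernoulli_comp_one_add_X n)))

lemma PkR_eval_sub_eval_sub_one (k : ℕ) (u : ℝ) :
    (PkR k).eval u - (PkR k).eval (u - 1) = u ^ k := by
  have hB := bernR_eval_add_one (k + 1) u
  simp only [PkR, eval_mul, eval_sub, eval_comp, eval_add, eval_X, eval_one, eval_C,
    sub_add_cancel] at hB ⊢
  push_cast at hB
  field_simp
  linear_combination hB

-- For `k = 0` the formula gives `P_0 = X + 1`, hence the separate `h_0 u` term in `extSumPoly`.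
lemma PkR_eval_zero {k : ℕ} (hk : 1 ≤ k) : (PkR k).eval 0 = 0 := by
  have hB := bernR_eval_add_one (k + 1) 0
  simp only [zero_add, add_tsub_cancel_right, zero_pow (by omega : k ≠ 0), mul_zero,
    add_zero] at hB
  simp [PkR, eval_comp, hB]

lemma extSumPoly_eval_zero (h : ℝ[X]) : (extSumPoly h).eval 0 = 0 := by
  simp only [extSumPoly, eval_add, eval_mul, eval_C, eval_X, mul_zero, zero_add, eval_finsetSum]
  exact Finset.sum_eq_zero fun k hk => by rw [PkR_eval_zero (Finset.mem_Icc.mp hk).1, mul_zero]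

lemma extSumPoly_eval_sub_eval_sub_one (h : ℝ[X]) (u : ℝ) :
    (extSumPoly h).eval u - (extSumPoly h).eval (u - 1) = h.eval u := by
  have hrange : Finset.range (h.natDegree + 1) = insert 0 (Finset.Icc 1 h.natDegree) := by
    ext k; simp only [Finset.mem_range, Finset.mem_insert, Finset.mem_Icc]; omega
  rw [eval_eq_sum_range (p := h), hrange, Finset.sum_insert (by simp)]
  simp only [extSumPoly, eval_add, eval_mul, eval_C, eval_X, eval_finsetSum]
  have hsum : ∑ k ∈ Finset.Icc 1 h.natDegree, h.coeff k * (PkR k).eval u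
      - ∑ k ∈ Finset.Icc 1 h.natDegree, h.coeff k * (PkR k).eval (u - 1)
      = ∑ k ∈ Finset.Icc 1 h.natDegree, h.coeff k * u ^ k := by
    rw [← Finset.sum_sub_distrib]
    exact Finset.sum_congr rfl fun k _ => by rw [← mul_sub, PkR_eval_sub_eval_sub_one]
  linear_combination hsum

theorem Polynomial.eq_of_eval_zero_eq_of_eval_sub_eval_sub_one {R : Type*} [CommRing R]
    [IsDomain R] [CharZero R] {p q : R[X]} (h0 : p.eval 0 = q.eval 0)
    (hstep : ∀ u, p.eval u - p.eval (u - 1) = q.eval u - q.eval (u - 1)) : p = q := by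
  have hnat : ∀ n : ℕ, p.eval (n : R) = q.eval (n : R) := by
    intro n
    induction n with
    | zero => simpa using h0
    | succ n ih =>
      have := hstep (n + 1)
      push_cast
      rw [add_sub_cancel_right, ih] at this
      linear_combination this
  refine eq_of_infinite_eval_eq p q (Set.Infinite.mono ?_ (Set.infinite_range_of_injective
    Nat.cast_injective))
  rintro _ ⟨n, rfl⟩
  exact hnat n

lemma extSumPoly_eq_neg_comp (p : ℝ[X]) (hp0 : p.eval 0 = 0) :
    extSumPoly p = -(extSumPoly (p.comp (-X))).comp (-X - 1) := by
  have hS := fun u => extSumPoly_eval_sub_eval_sub_one (p.comp (-X)) u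
  simp only [eval_comp, eval_neg, eval_X] at hS
  refine eq_of_eval_zero_eq_of_eval_sub_eval_sub_one ?_ fun u => ?_
  · have := hS 0
    simp only [neg_zero, hp0, zero_sub, extSumPoly_eval_zero] at this
    simp only [extSumPoly_eval_zero, eval_neg, eval_comp, eval_sub, eval_X, eval_one, neg_zero,
      zero_sub, zero_eq_neg]
    linear_combination -this
  · have := hS (-u)
    simp only [neg_neg] at this
    simp only [extSumPoly_eval_sub_eval_sub_one, eval_neg, eval_comp, eval_sub, eval_X, eval_one]
    rw [show -(u - 1) - 1 = -u by ring]
    linear_combination -this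

lemma fdPoly_eval_zero : ∀ (n : ℕ) (a : ℕ → ℝ), (fdPoly n a).eval 0 = 0
  | 0, _ => eval_X
  | _ + 1, _ => extSumPoly_eval_zero _

lemma fd_add_two (n : ℕ) (a : ℕ → ℝ) :
    fd (n + 2) a =
      (extSumPoly ((fdPoly n fun i => a (i + 2)).comp (C (a 1) * X))).eval (a 0) :=
  rfl

theorem fd_reflection (d : ℕ) (hd : 2 ≤ d) (a : ℕ → ℝ) :
    fd d a = -fd d (fun i => if i = 0 then -a 0 - 1 else if i = 1 then -a 1 else a i) := by
  obtain ⟨n, rfl⟩ : ∃ n, d = n + 2 := ⟨d - 2, by omega⟩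
  have h0 : ((fdPoly n fun i => a (i + 2)).comp (C (a 1) * X)).eval 0 = 0 := by
    simp [eval_comp, fdPoly_eval_zero]
  simp only [fd_add_two, Nat.add_eq_zero_iff, OfNat.ofNat_ne_zero, and_false, if_false, if_true]
  rw [extSumPoly_eq_neg_comp _ h0]
  simp [eval_comp, comp_assoc]
end

section
/- Let v_1,…,v_{d+1} ∈ ℝ^d be the vertices of a d-simplex in general position, and set x̂_{i,j} = x_{i,j} − x_{d+1,j} for 1 ≤ i ≤ d, 1 ≤ j ≤ d. Then Σ_{σ ∈ S_d} sign(σ) · ∏_{j=1}^{d} ẑ(σ,j) = (−1)^{d(d−1)/2} · det X̂(𝟏,d), where 𝟏 is the identity permutation. -/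
open MeasureTheory Polynomial

/-! Write `w_i = v_i - v_{d+1}` for the rows of `X̂(1,d)`. Then `ẑ(σ,k)` is the leading `k × k`
minor of the rows `w_{σ(1)}, …, w_{σ(k)}` divided by the same minor bordered by a column of ones,
and general position makes every bordered minor of distinct rows nonzero.

Induct on `d`, splitting `σ` according to the row `w_j` it puts last. The last factor `ẑ(σ,d)`
does not depend on `σ`, since permuting the rows multiplies numerator and denominator by `sign σ`;
the other factors are those of the rows without `w_j`, so by induction the sum over the
remaining freedom gives `(-1)^((d-1)(d-2)/2)` times the minor of those rows, with the sign
`(-1)^(d-j)` of the cycle moving `j` to the end. What is left, `Σ_j (-1)^(d-j)` times these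
minors, is `(-1)^(d-1) det Ŷ(1,d)` by Laplace expansion along the column of ones, and it cancels
the denominator of `ẑ(σ,d)`. -/
open Matrix Equiv

section Minors

variable {R : Type*} [CommRing R]

def leadingMinor {k : ℕ} (w : Fin k → ℕ → R) : R :=
  (Matrix.of fun p q : Fin k => w p q).det

def borderedMinor {k : ℕ} (w : Fin (k + 1) → ℕ → R) : R :=
  (Matrix.of fun p => vecCons 1 fun q : Fin k => w p q).det

lemma leadingMinor_comp_perm {k : ℕ} (w : Fin k → ℕ → R) (σ : Perm (Fin k)) :
    leadingMinor (w ∘ σ) = Perm.sign σ * leadingMinor w :=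
  det_permute σ (Matrix.of fun p q : Fin k => w p q)

lemma borderedMinor_comp_perm {k : ℕ} (w : Fin (k + 1) → ℕ → R) (σ : Perm (Fin (k + 1))) :
    borderedMinor (w ∘ σ) = Perm.sign σ * borderedMinor w :=
  det_permute σ (Matrix.of fun p => vecCons 1 fun q : Fin k => w p q)

lemma borderedMinor_eq_sum_leadingMinor {k : ℕ} (w : Fin (k + 1) → ℕ → R) :
    borderedMinor w = ∑ j : Fin (k + 1), (-1) ^ (j : ℕ) * leadingMinor (w ∘ j.succAbove) := by
  rw [borderedMinor, det_succ_column_zero]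
  simp [leadingMinor, Matrix.submatrix]

end Minors

section PermSnoc

variable {n : ℕ}

def permSnoc (j : Fin (n + 1)) (τ : Perm (Fin n)) : Perm (Fin (n + 1)) :=
  (finSuccEquivLast.trans τ.optionCongr).trans (finSuccEquiv' j).symm

@[simp]
lemma permSnoc_castSucc (j : Fin (n + 1)) (τ : Perm (Fin n)) (i : Fin n) :
    permSnoc j τ i.castSucc = j.succAbove (τ i) := by
  simp [permSnoc]

@[simp]
lemma permSnoc_last (j : Fin (n + 1)) (τ : Perm (Fin n)) : permSnoc j τ (Fin.last n) = j := by
  simp [permSnoc]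

lemma permSnoc_eq_cycleIcc_mul (j : Fin (n + 1)) (τ : Perm (Fin n)) :
    permSnoc j τ = Fin.cycleIcc j (Fin.last n) * permSnoc (Fin.last n) τ := by
  ext x
  induction x using Fin.lastCases with
  | last => simp [Fin.cycleIcc_of_last (Fin.le_last j)]
  | cast i =>
    simp [← congrFun (Fin.cycleIcc_comp_succAbove j (Fin.last n) (Fin.le_last j)) (τ i)]

lemma sign_permSnoc (j : Fin (n + 1)) (τ : Perm (Fin n)) :
    Perm.sign (permSnoc j τ) = (-1) ^ n * (-1) ^ (j : ℕ) * Perm.sign τ := by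
  have hlast : Perm.sign (permSnoc (Fin.last n) τ) = Perm.sign τ :=
    (Perm.sign_permCongr finSuccEquivLast.symm τ.optionCongr).trans (optionCongr_sign τ)
  rw [permSnoc_eq_cycleIcc_mul, Perm.sign_mul, hlast, Fin.sign_cycleIcc_of_le (Fin.le_last j),
    Fin.val_last, pow_sub _ j.is_le, Int.units_inv_eq_self]

lemma permSnoc_bijective :
    Function.Bijective fun x : Fin (n + 1) × Perm (Fin n) => permSnoc x.1 x.2 := by
  refine (Fintype.bijective_iff_injective_and_card _).2 ⟨?_, ?_⟩
  · rintro ⟨j, τ⟩ ⟨j', τ'⟩ h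
    obtain rfl : j = j' := by simpa using congr($h (Fin.last n))
    refine Prod.ext rfl (Equiv.ext fun i => (j.succAbove_right_injective ?_))
    simpa using congr($h i.castSucc)
  · simp [Fintype.card_perm, Nat.factorial_succ]

lemma sum_perm_eq_sum_sum_permSnoc {M : Type*} [AddCommMonoid M]
    (f : Perm (Fin (n + 1)) → M) :
    ∑ σ, f σ = ∑ j, ∑ τ, f (permSnoc j τ) := by
  rw [← Fintype.sum_prod_type', Fintype.sum_bijective _ permSnoc_bijective _ _ fun _ => rfl]

lemma init_comp_permSnoc {α : Type*} (w : Fin (n + 1) → α) (j : Fin (n + 1))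
    (τ : Perm (Fin n)) : Fin.init (w ∘ permSnoc j τ) = (w ∘ j.succAbove) ∘ τ := by
  funext i
  simp [Fin.init]

end PermSnoc

section PrefixRatio

variable {K : Type*} [Field K]

def prefixRatioProd {n : ℕ} (w : Fin n → ℕ → K) : K :=
  ∏ k : Fin n,
    leadingMinor (Fin.take (k + 1) k.isLt w) / borderedMinor (Fin.take (k + 1) k.isLt w)

lemma prefixRatioProd_succ {n : ℕ} (w : Fin (n + 1) → ℕ → K) :
    prefixRatioProd w = prefixRatioProd (Fin.init w) * (leadingMinor w / borderedMinor w) := by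
  rw [prefixRatioProd, Fin.prod_univ_castSucc]
  simp only [Fin.val_castSucc, Fin.val_last, Fin.take_eq_self]
  rfl

theorem sum_sign_mul_prefixRatioProd {n : ℕ} (w : Fin n → ℕ → K)
    (hw : ∀ (k : ℕ) (f : Fin (k + 1) → Fin n), StrictMono f → borderedMinor (w ∘ f) ≠ 0) :
    ∑ σ : Perm (Fin n), (Perm.sign σ : K) * prefixRatioProd (w ∘ σ)
      = (-1) ^ (n * (n - 1) / 2) * leadingMinor w := by
  induction n with
  | zero => simp [prefixRatioProd, leadingMinor]
  | succ n ih =>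
    have hB : borderedMinor w ≠ 0 := hw n id strictMono_id
    have hterm : ∀ j τ, (Perm.sign (permSnoc j τ) : K) * prefixRatioProd (w ∘ permSnoc j τ)
        = (-1) ^ n * (-1) ^ (j : ℕ)
            * ((Perm.sign τ : K) * prefixRatioProd ((w ∘ j.succAbove) ∘ τ))
            * (leadingMinor w / borderedMinor w) := by
      intro j τ
      have hsign : (Perm.sign (permSnoc j τ) : K) ≠ 0 :=
        ((Perm.sign (permSnoc j τ)).isUnit.map (Int.castRingHom K)).ne_zero
      rw [prefixRatioProd_succ, init_comp_permSnoc, leadingMinor_comp_perm,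
        borderedMinor_comp_perm, mul_div_mul_left _ _ hsign, sign_permSnoc]
      push_cast
      ring
    have hsub : ∀ j : Fin (n + 1), ∀ (k : ℕ) (f : Fin (k + 1) → Fin n), StrictMono f →
        borderedMinor ((w ∘ j.succAbove) ∘ f) ≠ 0 :=
      fun j k f hf => hw k _ ((Fin.strictMono_succAbove j).comp hf)
    calc ∑ σ, (Perm.sign σ : K) * prefixRatioProd (w ∘ σ)
        = ∑ j : Fin (n + 1), (-1) ^ n * (-1) ^ (j : ℕ)
            * ((-1) ^ (n * (n - 1) / 2) * leadingMinor (w ∘ j.succAbove))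
            * (leadingMinor w / borderedMinor w) := by
          simp_rw [sum_perm_eq_sum_sum_permSnoc, hterm, ← Finset.sum_mul, ← Finset.mul_sum,
            ih _ (hsub _)]
      _ = (-1) ^ (n * (n - 1) / 2 + n) * borderedMinor w * (leadingMinor w / borderedMinor w) := by
          rw [borderedMinor_eq_sum_leadingMinor, Finset.mul_sum, Finset.sum_mul]
          refine Finset.sum_congr rfl fun j _ => ?_
          ring
      _ = (-1) ^ ((n + 1) * (n + 1 - 1) / 2) * leadingMinor w := by
          rw [Nat.triangle_succ, mul_assoc, mul_div_cancel₀ _ hB]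

end PrefixRatio

lemma AffineIndependent.det_vecCons_one_sub_ne_zero {K : Type*} [Field K] {k : ℕ}
    {z : Fin (k + 1) → Fin k → K} (hz : AffineIndependent K z) (c : Fin k → K) :
    (Matrix.of fun p => vecCons 1 (z p - c)).det ≠ 0 := by
  intro hdet
  obtain ⟨t, ht, htM⟩ := Matrix.exists_vecMul_eq_zero_iff.2 hdet
  have hsum : ∑ p, t p = 0 := by simpa [vecMul, dotProduct] using congr($htM 0)
  have hcomb : ∑ p, t p • z p = 0 := by
    funext q
    have hq : ∑ p, t p * (z p q - c q) = 0 := by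
      simpa [vecMul, dotProduct] using congr($htM q.succ)
    simpa [mul_sub, Finset.sum_sub_distrib, ← Finset.sum_mul, hsum] using hq
  exact ht (funext fun p => affineIndependent_iff.1 hz _ t hsum hcomb p (Finset.mem_univ p))

def hatRow (d : ℕ) (v : Fin (d + 1) → Fin d → ℝ) (i : Fin d) (q : ℕ) : ℝ :=
  coordN (v i.castSucc) q - coordN (v (Fin.last d)) q

namespace SimplexGenPos

variable {d : ℕ} {v : Fin (d + 1) → Fin d → ℝ}

lemma affineIndependent_projTo (hv : SimplexGenPos d v) {k : ℕ} (hk : k < d)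
    {f : Fin (k + 1) → Fin (d + 1)} (hf : Function.Injective f) :
    AffineIndependent ℝ fun p => projTo d k (v (f p)) := by
  have hspan := hv.2 k hk (Finset.univ.map ⟨f, hf⟩) (by simp)
  rw [Finset.coe_map, Finset.coe_univ, Set.image_univ, Function.Embedding.coeFn_mk,
    ← Set.range_comp, ← Set.range_comp] at hspan
  rw [affineIndependent_iff_finrank_vectorSpan_eq ℝ _ (Fintype.card_fin _),
    ← direction_affineSpan]
  change Module.finrank ℝ (affineSpan ℝ (Set.range (projTo d k ∘ v ∘ f))).direction = k
  rw [hspan, AffineSubspace.direction_top, finrank_top, Module.finrank_fin_fun]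

lemma borderedMinor_hatRow_comp_ne_zero (hv : SimplexGenPos d v) {k : ℕ}
    {f : Fin (k + 1) → Fin d} (hf : Function.Injective f) :
    borderedMinor (hatRow d v ∘ f) ≠ 0 :=
  (hv.affineIndependent_projTo (Fin.le_of_injective f hf) ((Fin.castSucc_injective d).comp hf))
    |>.det_vecCons_one_sub_ne_zero (projTo d k (v (Fin.last d)))

end SimplexGenPos

section HatMatrices

variable {d : ℕ} (v : Fin (d + 1) → Fin d → ℝ) (σ : Perm (Fin d))

lemma det_XhatM {k : ℕ} (hk : k ≤ d) :
    (XhatM d v σ k).det = leadingMinor (Fin.take k hk (hatRow d v ∘ σ)) := by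
  congr 1
  ext p q
  simp [XhatM, rowVert', hatRow, Fin.take_apply, Fin.castLE, Fin.val_lt_of_le p hk]

lemma det_YhatM {k : ℕ} (hk : k + 1 ≤ d) :
    (YhatM d v σ (k + 1)).det = borderedMinor (Fin.take (k + 1) hk (hatRow d v ∘ σ)) := by
  congr 1
  ext p q
  induction q using Fin.cases with
  | zero => simp [YhatM]
  | succ q => simp [YhatM, rowVert', hatRow, Fin.take_apply, Fin.castLE, Fin.val_lt_of_le p hk]

lemma prod_zhat_eq_prefixRatioProd :
    ∏ j ∈ Finset.Icc 1 d, zhat d v σ j = prefixRatioProd (hatRow d v ∘ σ) := by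
  rw [← Finset.Ico_add_one_right_eq_Icc, Finset.prod_Ico_eq_prod_range, Nat.add_sub_cancel,
    ← Fin.prod_univ_eq_prod_range]
  refine Finset.prod_congr rfl fun k _ => ?_
  rw [add_comm, zhat, det_XhatM v σ k.isLt, det_YhatM v σ k.isLt]

end HatMatrices

theorem signed_sum_prod_zhat_eq_det_general
    (d : ℕ) (v : Fin (d + 1) → Fin d → ℝ) (hGP : SimplexGenPos d v) :
    ∑ σ : Equiv.Perm (Fin d),
        ((Equiv.Perm.sign σ : ℤ) : ℝ) * ∏ j ∈ Finset.Icc 1 d, zhat d v σ j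
      = (-1 : ℝ) ^ (d * (d - 1) / 2) * (XhatM d v 1 d).det := by
  simp_rw [prod_zhat_eq_prefixRatioProd]
  rw [sum_sign_mul_prefixRatioProd _ fun _ _ hf =>
      hGP.borderedMinor_hatRow_comp_ne_zero hf.injective,
    det_XhatM v 1 le_rfl, Fin.take_eq_self, Perm.coe_one, Function.comp_id]

theorem signed_sum_prod_zhat_eq_det
    (d : ℕ) (hd : 1 ≤ d) (v : Fin (d + 1) → Fin d → ℝ) (hGP : SimplexGenPos d v) :
    ∑ σ : Equiv.Perm (Fin d),
        ((Equiv.Perm.sign σ : ℤ) : ℝ) * ∏ j ∈ Finset.Icc 1 d, zhat d v σ j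
      = (-1 : ℝ) ^ (d * (d - 1) / 2) * (XhatM d v 1 d).det :=
  signed_sum_prod_zhat_eq_det_general d v hGP
end
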